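/- For every formula φ ∈ Fm, ⊢_{EL5} K□φ ∨ K¬□φ. -/

import Mathlib

/-- Formulas of the modal-epistemic language: variables, ⊥, ∧, ∨, →, □, K. -/
inductive Fm : Type
  | var : ℕ → Fm
  | bot : Fm
  | and : Fm → Fm → Fm
  | or : Fm → Fm → Fm
  | imp : Fm → Fm → Fm
  | box : Fm → Fm
  | k : Fm → Fm
  deriving DecidableEq

namespace Fm

/-- ¬φ := φ → ⊥ -/
def neg (φ : Fm) : Fm := φ.imp .bot

/-- ⊤ := ¬⊥ -/
def top : Fm := neg .bot

/-- φ ↔ ψ := (φ→ψ) ∧ (ψ→φ) -/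
def iff (φ ψ : Fm) : Fm := (φ.imp ψ).and (ψ.imp φ)

/-- Propositional identity φ ≡ ψ := □(φ→ψ) ∧ □(ψ→φ). -/
def ident (φ ψ : Fm) : Fm := ((φ.imp ψ).box).and ((ψ.imp φ).box)

/-- Substitution of `σ` for every occurrence of the variable `x`. -/
def subst (x : ℕ) (σ : Fm) : Fm → Fm
  | var n => if n = x then σ else var n
  | bot => bot
  | and a b => and (subst x σ a) (subst x σ b)
  | or a b => or (subst x σ a) (subst x σ b)
  | imp a b => imp (subst x σ a) (subst x σ b)
  | box a => box (subst x σ a)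
  | k a => k (subst x σ a)

/-- Propositional formulas (the set Fm₀): neither □ nor K occurs. -/
def IsProp : Fm → Prop
  | var _ => True
  | bot => True
  | and a b => a.IsProp ∧ b.IsProp
  | or a b => a.IsProp ∧ b.IsProp
  | imp a b => a.IsProp ∧ b.IsProp
  | box _ => False
  | k _ => False

end Fm

/-- Hilbert-style axiom schemes of intuitionistic propositional logic, with
schematic letters ranging over all formulas of `Fm` (so the derivable formulas
are exactly the substitution instances of IPC theorems). -/
inductive IntAx : Fm → Prop
  | k (φ ψ : Fm) : IntAx (φ.imp (ψ.imp φ))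
  | s (φ ψ χ : Fm) : IntAx ((φ.imp (ψ.imp χ)).imp ((φ.imp ψ).imp (φ.imp χ)))
  | andIntro (φ ψ : Fm) : IntAx (φ.imp (ψ.imp (φ.and ψ)))
  | andLeft (φ ψ : Fm) : IntAx ((φ.and ψ).imp φ)
  | andRight (φ ψ : Fm) : IntAx ((φ.and ψ).imp ψ)
  | orInl (φ ψ : Fm) : IntAx (φ.imp (φ.or ψ))
  | orInr (φ ψ : Fm) : IntAx (ψ.imp (φ.or ψ))
  | orElim (φ ψ χ : Fm) : IntAx ((φ.imp χ).imp ((ψ.imp χ).imp ((φ.or ψ).imp χ)))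
  | exfalso (φ : Fm) : IntAx (Fm.bot.imp φ)

/-- Derivability in intuitionistic propositional calculus from hypotheses `Φ`
(Hilbert style, Modus Ponens as the only rule). -/
inductive IPC (Φ : Set Fm) : Fm → Prop
  | hyp {φ} : φ ∈ Φ → IPC Φ φ
  | ax {φ} : IntAx φ → IPC Φ φ
  | mp {φ ψ} : IPC Φ (φ.imp ψ) → IPC Φ φ → IPC Φ ψ

/-- The modal logics L3, EL3⁻ (written `EL3m`), EL3, EL4, EL5. -/
inductive ModalLogic : Type
  | L3 | EL3m | EL3 | EL4 | EL5
  deriving DecidableEq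

/-- The axioms of the logic `L`:
(INT) all theorems of IPC and their substitution instances,
(A1) □(φ∨ψ)→(□φ∨□ψ), (A2) □φ→φ, (A3) □(φ→ψ)→□(□φ→□ψ);
(A7) □φ→□Kφ for the epistemic logics EL3⁻, EL3, EL4, EL5;
(A8) Kφ→¬¬φ for EL3, EL4, EL5; (A4) □φ→□□φ for EL4, EL5;
(A5) ¬□φ→□¬□φ for EL5. -/
inductive IsAxiom : ModalLogic → Fm → Prop
  | int {L : ModalLogic} {φ : Fm} : IPC ∅ φ → IsAxiom L φ
  | a1 (L : ModalLogic) (φ ψ : Fm) :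
      IsAxiom L (((φ.or ψ).box).imp ((φ.box).or (ψ.box)))
  | a2 (L : ModalLogic) (φ : Fm) : IsAxiom L ((φ.box).imp φ)
  | a3 (L : ModalLogic) (φ ψ : Fm) :
      IsAxiom L (((φ.imp ψ).box).imp (((φ.box).imp (ψ.box)).box))
  | a7 {L : ModalLogic} (φ : Fm) : L ≠ ModalLogic.L3 →
      IsAxiom L ((φ.box).imp ((φ.k).box))
  | a8 {L : ModalLogic} (φ : Fm) :
      L = ModalLogic.EL3 ∨ L = ModalLogic.EL4 ∨ L = ModalLogic.EL5 →
      IsAxiom L ((φ.k).imp (φ.neg.neg))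
  | a4 {L : ModalLogic} (φ : Fm) :
      L = ModalLogic.EL4 ∨ L = ModalLogic.EL5 →
      IsAxiom L ((φ.box).imp (φ.box.box))
  | a5 {L : ModalLogic} (φ : Fm) : L = ModalLogic.EL5 →
      IsAxiom L ((φ.box.neg).imp (φ.box.neg.box))

/-- Derivability from hypotheses `Φ` in logic `L`: hypotheses, axioms, the
theorem scheme (T) of tertium non datur, Modus Ponens, and Axiom Necessitation
(applicable only to axioms). -/
inductive Deriv (L : ModalLogic) (Φ : Set Fm) : Fm → Prop
  | hyp {φ} : φ ∈ Φ → Deriv L Φ φ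
  | ax {φ} : IsAxiom L φ → Deriv L Φ φ
  | tnd (φ : Fm) : Deriv L Φ (φ.or φ.neg)
  | mp {φ ψ} : Deriv L Φ (φ.imp ψ) → Deriv L Φ φ → Deriv L Φ ψ
  | an {φ} : IsAxiom L φ → Deriv L Φ (φ.box)

/-- ⊢_L φ : theoremhood in logic `L`. -/
def Thm (L : ModalLogic) (φ : Fm) : Prop := Deriv L ∅ φ

/-! Under (A4) and (A5) both `□φ` and `¬□φ` imply their own necessity, and by (A7) and (A2) any
formula `ψ` with `ψ → □ψ` implies `Kψ`. Tertium non datur for `□φ` then gives `K□φ ∨ K¬□φ`. -/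

namespace Deriv

variable {L : ModalLogic} {Φ : Set Fm}

theorem of_intAx {φ : Fm} (h : IntAx φ) : Deriv L Φ φ :=
  .ax (.int (.ax h))

theorem imp_trans {a b c : Fm} (hab : Deriv L Φ (a.imp b)) (hbc : Deriv L Φ (b.imp c)) :
    Deriv L Φ (a.imp c) :=
  .mp (.mp (of_intAx (.s a b c)) (.mp (of_intAx (.k _ a)) hbc)) hab

theorem or_imp_or {a b c d : Fm} (hac : Deriv L Φ (a.imp c)) (hbd : Deriv L Φ (b.imp d)) :
    Deriv L Φ ((a.or b).imp (c.or d)) :=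
  .mp (.mp (of_intAx (.orElim a b _)) (imp_trans hac (of_intAx (.orInl c d))))
    (imp_trans hbd (of_intAx (.orInr c d)))

theorem imp_k_of_imp_box (hL : L ≠ .L3) {ψ : Fm} (h : Deriv L Φ (ψ.imp ψ.box)) :
    Deriv L Φ (ψ.imp ψ.k) :=
  imp_trans (imp_trans h (.ax (.a7 ψ hL))) (.ax (.a2 L ψ.k))

end Deriv

/-- ⊢_{EL5} K□φ ∨ K¬□φ. -/
theorem stmt_10 (φ : Fm) :
    Thm ModalLogic.EL5 ((φ.box.k).or (φ.box.neg.k)) := by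
  have box_imp_k : Deriv .EL5 ∅ (φ.box.imp φ.box.k) :=
    Deriv.imp_k_of_imp_box (by decide) (.ax (.a4 φ (.inr rfl)))
  have neg_box_imp_k : Deriv .EL5 ∅ (φ.box.neg.imp φ.box.neg.k) :=
    Deriv.imp_k_of_imp_box (by decide) (.ax (.a5 φ rfl))
  exact .mp (Deriv.or_imp_or box_imp_k neg_box_imp_k) (.tnd φ.box)
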